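/- Consider one iteration of the cGA with well-behaved hypothetical population size μ > 0 maximizing LeadingOnes on bit strings of length n, started from a frequency vector p with 1/n + 1/μ ≤ p_i ≤ 1 − 1/n − 1/μ for some i ∈ [2 .. n] (so no border capping occurs at position i). Conditioned on the event that the two samples differ at position i and at least one of them has a 0 among positions 1, …, i − 1, the frequency at position i increases by 1/μ with conditional probability exactly 1/2 and decreases by 1/μ with conditional probability exactly 1/2. -/

import Mathlib

/-- The LeadingOnes fitness function: the length of the longest all-ones prefix. -/
noncomputable def leadingOnes {n : ℕ} (x : Fin n → Bool) : ℝ :=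
  (((Finset.univ : Finset (Fin n)).filter (fun i => ∀ j ≤ i, x j = true)).card : ℝ)

/-- Capping a frequency value into the interval `[1/n, 1 - 1/n]`. -/
noncomputable def capFreq (n : ℕ) (v : ℝ) : ℝ :=
  max (1 / (n : ℝ)) (min (1 - 1 / (n : ℝ)) v)

/-- `μ` is a well-behaved hypothetical population size: it is positive and
`1/2 - 1/n` is an integer multiple of the step size `1/μ`. -/
def WellBehaved (n : ℕ) (μ : ℝ) : Prop :=
  0 < μ ∧ ∃ k : ℕ, (1 / 2 : ℝ) - 1 / (n : ℝ) = (k : ℝ) / μ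

/-- A run of the compact genetic algorithm (cGA) with hypothetical population size `μ`
maximizing the fitness function `f` on bit strings of length `n`, started from the
initial frequency vector `p0`.  The randomness is realized by i.i.d. uniform-`[0,1]`
random variables `u k t i` (one for each of the two samples `k : Fin 2`, each
iteration `t : ℕ` and each position `i : Fin n`); bit `i` of sample `k` in iteration
`t` is `1` iff `u k t i < (p t) i`.  Writing `y¹, y²` for the better and the worse of
the two samples (ties resolved in favour of the first sample), each frequency is
updated by `(1/μ) * (y¹ᵢ - y²ᵢ)` and then capped into `[1/n, 1-1/n]`. -/
structure CGA (n : ℕ) (μ : ℝ) (f : (Fin n → Bool) → ℝ) (p0 : Fin n → ℝ) where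
  Omega : Type
  [measSpace : MeasurableSpace Omega]
  P : MeasureTheory.Measure Omega
  isProb : MeasureTheory.IsProbabilityMeasure P
  /-- the underlying i.i.d. uniform random variables -/
  u : Fin 2 → ℕ → Fin n → Omega → ℝ
  uMeas : ∀ k t i, Measurable (u k t i)
  uUnif : ∀ k t i, P.map (u k t i) = MeasureTheory.volume.restrict (Set.Icc (0 : ℝ) 1)
  uIndep : ProbabilityTheory.iIndepFun
    (m := fun _ : Fin 2 × ℕ × Fin n => (inferInstance : MeasurableSpace ℝ))
    (fun kti ω => u kti.1 kti.2.1 kti.2.2 ω) P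
  /-- the frequency vector at each iteration -/
  p : ℕ → Omega → Fin n → ℝ
  /-- the two samples of each iteration -/
  x : Fin 2 → ℕ → Omega → Fin n → Bool
  hp0 : ∀ ω i, p 0 ω i = p0 i
  hx : ∀ k t ω i, x k t ω i = decide (u k t i ω < p t ω i)
  hupdate : ∀ t ω i, p (t + 1) ω i =
    capFreq n (p t ω i + (1 / μ) *
      (if f (x 0 t ω) ≥ f (x 1 t ω)
        then ((x 0 t ω i).toNat : ℝ) - ((x 1 t ω i).toNat : ℝ)
        else ((x 1 t ω i).toNat : ℝ) - ((x 0 t ω i).toNat : ℝ)))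

lemma leadingOnes_le_of_false {n : ℕ} {x : Fin n → Bool} {j0 : Fin n}
    (h : x j0 = false) : leadingOnes x ≤ (j0 : ℝ) := by
  unfold leadingOnes
  have hsub : (Finset.univ.filter (fun i : Fin n => ∀ j ≤ i, x j = true)) ⊆ Finset.Iio j0 := by
    intro i hi
    simp only [Finset.mem_filter] at hi
    rw [Finset.mem_Iio]
    by_contra hle
    push_neg at hle
    have := hi.2 j0 hle
    simp [h] at this
  have hcard := Finset.card_le_card hsub
  have hIio : (Finset.Iio j0).card = (j0 : ℕ) := by simp
  rw [hIio] at hcard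
  exact_mod_cast hcard

lemma le_leadingOnes_of_prefix {n m : ℕ} (hm : m ≤ n) {x : Fin n → Bool}
    (h : ∀ j : Fin n, (j : ℕ) < m → x j = true) : (m : ℝ) ≤ leadingOnes x := by
  unfold leadingOnes
  have hsub : (Finset.univ : Finset (Fin m)).image (Fin.castLE hm) ⊆
      Finset.univ.filter (fun i : Fin n => ∀ j ≤ i, x j = true) := by
    intro i hi
    simp only [Finset.mem_image] at hi
    obtain ⟨j, -, rfl⟩ := hi
    simp only [Finset.mem_filter, Finset.mem_univ, true_and]
    intro j' hj'
    exact h j' (lt_of_le_of_lt (by exact_mod_cast hj') j.isLt)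
  have hcard := Finset.card_le_card hsub
  rw [Finset.card_image_of_injective _ (Fin.castLE_injective hm), Finset.card_univ,
    Fintype.card_fin] at hcard
  exact_mod_cast hcard

lemma leadingOnes_congr {n : ℕ} {x y : Fin n → Bool} {I j0 : Fin n}
    (hlt : j0 < I) (h0 : x j0 = false) (hxy : ∀ j, j ≠ I → x j = y j) :
    leadingOnes x = leadingOnes y := by
  unfold leadingOnes
  rw [Nat.cast_inj]
  congr 1
  apply Finset.filter_congr
  intro i _
  have hne : j0 ≠ I := ne_of_lt hlt
  constructor
  · intro hx j hj
    have hij0 : i < j0 := by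
      by_contra hle
      push_neg at hle
      have := hx j0 hle
      simp [h0] at this
    rw [← hxy j (ne_of_lt (lt_of_le_of_lt (le_trans hj (le_of_lt hij0)) hlt))]
    exact hx j hj
  · intro hy j hj
    have hij0 : i < j0 := by
      by_contra hle
      push_neg at hle
      have := hy j0 hle
      rw [← hxy j0 hne, h0] at this
      simp at this
    rw [hxy j (ne_of_lt (lt_of_le_of_lt (le_trans hj (le_of_lt hij0)) hlt))]
    exact hy j hj

lemma winner_iff {n : ℕ} {x0 x1 y0 y1 : Fin n → Bool} {I : Fin n}
    (hy0I : y0 I = true) (hy1I : y1 I = true)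
    (h0 : ∀ j, j ≠ I → x0 j = y0 j) (h1 : ∀ j, j ≠ I → x1 j = y1 j)
    (hz : (∃ j, j < I ∧ x0 j = false) ∨ (∃ j, j < I ∧ x1 j = false)) :
    (leadingOnes x0 ≥ leadingOnes x1 ↔ leadingOnes y0 ≥ leadingOnes y1) := by
  by_cases hz0 : ∃ j, j < I ∧ x0 j = false
  · by_cases hz1 : ∃ j, j < I ∧ x1 j = false
    · obtain ⟨j0, hj0, hx0⟩ := hz0
      obtain ⟨j1, hj1, hx1⟩ := hz1
      rw [leadingOnes_congr hj0 hx0 h0, leadingOnes_congr hj1 hx1 h1]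
    · -- x1 has all-ones below I, x0 has a zero below I: both comparisons false
      obtain ⟨j0, hj0, hx0⟩ := hz0
      push_neg at hz1
      have hIle : (I : ℕ) ≤ n := le_of_lt I.isLt
      have hx1pre : ∀ j : Fin n, (j : ℕ) < (I : ℕ) → x1 j = true := by
        intro j hj
        have := hz1 j (by rwa [Fin.lt_def])
        cases hb : x1 j with
        | false => exact absurd hb this
        | true => rfl
      have hy1pre : ∀ j : Fin n, (j : ℕ) < (I : ℕ) → y1 j = true := by
        intro j hj
        rw [← h1 j (by exact Fin.ne_of_lt (by rwa [Fin.lt_def]))]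
        exact hx1pre j hj
      have hlx0 : leadingOnes x0 ≤ (j0 : ℝ) := leadingOnes_le_of_false hx0
      have hly0 : leadingOnes y0 = leadingOnes x0 := (leadingOnes_congr hj0 hx0 h0).symm
      have hlx1 : ((I : ℕ) : ℝ) ≤ leadingOnes x1 := le_leadingOnes_of_prefix hIle hx1pre
      have hly1 : ((I : ℕ) : ℝ) ≤ leadingOnes y1 := le_leadingOnes_of_prefix hIle hy1pre
      have hj0I : ((j0 : ℕ) : ℝ) < ((I : ℕ) : ℝ) := by exact_mod_cast hj0
      constructor
      · intro hge; linarith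
      · intro hge; rw [hly0] at hge; linarith
  · rcases hz with hz0' | hz1
    · exact absurd hz0' hz0
    · obtain ⟨j1, hj1, hx1⟩ := hz1
      push_neg at hz0
      have hIle : (I : ℕ) ≤ n := le_of_lt I.isLt
      have hx0pre : ∀ j : Fin n, (j : ℕ) < (I : ℕ) → x0 j = true := by
        intro j hj
        have := hz0 j (by rwa [Fin.lt_def])
        cases hb : x0 j with
        | false => exact absurd hb this
        | true => rfl
      have hy0pre : ∀ j : Fin n, (j : ℕ) < (I : ℕ) → y0 j = true := by
        intro j hj
        rw [← h0 j (by exact Fin.ne_of_lt (by rwa [Fin.lt_def]))]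
        exact hx0pre j hj
      have hlx1 : leadingOnes x1 ≤ (j1 : ℝ) := leadingOnes_le_of_false hx1
      have hly1 : leadingOnes y1 = leadingOnes x1 := (leadingOnes_congr hj1 hx1 h1).symm
      have hlx0 : ((I : ℕ) : ℝ) ≤ leadingOnes x0 := le_leadingOnes_of_prefix hIle hx0pre
      have hly0 : ((I : ℕ) : ℝ) ≤ leadingOnes y0 := le_leadingOnes_of_prefix hIle hy0pre
      have hj1I : ((j1 : ℕ) : ℝ) < ((I : ℕ) : ℝ) := by exact_mod_cast hj1
      constructor
      · intro _; rw [hly1]; linarith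
      · intro _; linarith


lemma capFreq_eq_self {n : ℕ} {v : ℝ} (h1 : 1 / (n : ℝ) ≤ v) (h2 : v ≤ 1 - 1 / (n : ℝ)) :
    capFreq n v = v := by
  unfold capFreq
  rw [min_eq_right h2, max_eq_right h1]

/-- unbiased update when an earlier zero is present.  Consider
one iteration of the cGA on LeadingOnes started from a frequency vector `p0` with
`1/n + 1/μ ≤ p0_i ≤ 1 - 1/n - 1/μ` at the (1-indexed) position `i ∈ [2..n]` (so no
border capping occurs there).  Conditioned on the event `D` that the two samples
differ at position `i` and at least one of them has a `0` among the positions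
`1, …, i-1`, the `i`-th frequency increases by `1/μ` with conditional probability
exactly `1/2` and decreases by `1/μ` with conditional probability exactly `1/2`. -/
theorem cga_leadingOnes_unbiased_update_given_earlier_zero
    (n : ℕ) (μ : ℝ) (hwb : WellBehaved n μ)
    (p0 : Fin n → ℝ) (hbox : ∀ j : Fin n, 1 / (n : ℝ) ≤ p0 j ∧ p0 j ≤ 1 - 1 / n)
    (i : ℕ) (hi2 : 2 ≤ i) (hin : i ≤ n)
    (hlow : 1 / (n : ℝ) + 1 / μ ≤ p0 ⟨i - 1, by omega⟩)
    (hhigh : p0 ⟨i - 1, by omega⟩ ≤ 1 - 1 / (n : ℝ) - 1 / μ)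
    (A : CGA n μ leadingOnes p0)
    (D Inc Dec : Set A.Omega)
    (hD : D = {ω | A.x 0 0 ω ⟨i - 1, by omega⟩ ≠ A.x 1 0 ω ⟨i - 1, by omega⟩ ∧
        ∃ k : Fin 2, ∃ j : Fin n, (j : ℕ) < i - 1 ∧ A.x k 0 ω j = false})
    (hInc : Inc = {ω | A.p 1 ω ⟨i - 1, by omega⟩ = p0 ⟨i - 1, by omega⟩ + 1 / μ})
    (hDec : Dec = {ω | A.p 1 ω ⟨i - 1, by omega⟩ = p0 ⟨i - 1, by omega⟩ - 1 / μ}) :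
    (A.P (D ∩ Inc)).toReal = (1 / 2) * (A.P D).toReal ∧
    (A.P (D ∩ Dec)).toReal = (1 / 2) * (A.P D).toReal := by
  classical
  letI := A.measSpace
  haveI := A.isProb
  obtain ⟨hμ, -⟩ := hwb
  have hn2 : 2 ≤ n := le_trans hi2 hin
  have hnR : (2 : ℝ) ≤ (n : ℝ) := by exact_mod_cast hn2
  have hμinv : (0 : ℝ) < 1 / μ := by positivity
  set I : Fin n := ⟨i - 1, by omega⟩ with hIdef
  set c : ℝ := p0 I with hcdef
  have hclow : 1 / (n : ℝ) ≤ c := (hbox I).1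
  have hchigh : c ≤ 1 - 1 / (n : ℝ) := (hbox I).2
  have hninv : (0 : ℝ) < 1 / (n : ℝ) := by positivity
  have hc0 : (0 : ℝ) ≤ c := le_trans (le_of_lt hninv) hclow
  have hc1 : c ≤ 1 := by linarith
  have hlow' : 1 / (n : ℝ) + 1 / μ ≤ c := hlow
  have hhigh' : c ≤ 1 - 1 / (n : ℝ) - 1 / μ := hhigh
  set a : A.Omega → ℝ := A.u 0 0 I with hadef
  set b : A.Omega → ℝ := A.u 1 0 I with hbdef
  set Xt : A.Omega → (Fin 2 → Fin n → Bool) :=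
    fun ω k j => if j = I then true else A.x k 0 ω j with hXtdef
  set GZ : Set (Fin 2 → Fin n → Bool) :=
    {x | ∃ j : Fin n, (j : ℕ) < i - 1 ∧ (x 0 j = false ∨ x 1 j = false)} with hGZdef
  set GW : Set (Fin 2 → Fin n → Bool) :=
    {x | leadingOnes (x 0) ≥ leadingOnes (x 1)} with hGWdef
  -- bits at position I
  have hbita : ∀ ω, A.x 0 0 ω I = decide (a ω < c) := by
    intro ω
    rw [A.hx 0 0 ω I, A.hp0 ω I, ← hcdef, ← hadef]
  have hbitb : ∀ ω, A.x 1 0 ω I = decide (b ω < c) := by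
    intro ω
    rw [A.hx 1 0 ω I, A.hp0 ω I, ← hcdef, ← hbdef]
  have hDiff : ∀ ω, (A.x 0 0 ω I ≠ A.x 1 0 ω I) ↔
      ((a ω < c ∧ ¬ b ω < c) ∨ (b ω < c ∧ ¬ a ω < c)) := by
    intro ω
    rw [hbita ω, hbitb ω]
    by_cases h1 : a ω < c <;> by_cases h2 : b ω < c <;> simp [h1, h2]
  -- Xt agrees with x off I
  have hXx : ∀ ω (k : Fin 2) (j : Fin n), j ≠ I → Xt ω k j = A.x k 0 ω j := by
    intro ω k j hj
    simp only [hXtdef]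
    rw [if_neg hj]
  have hXI : ∀ ω (k : Fin 2), Xt ω k I = true := by
    intro ω k
    simp only [hXtdef]
    simp
  have hneI : ∀ j : Fin n, (j : ℕ) < i - 1 → j ≠ I := by
    intro j hj
    refine Fin.ne_of_val_ne ?_
    rw [hIdef]
    simpa using Nat.ne_of_lt hj
  have hltI : ∀ j : Fin n, (j : ℕ) < i - 1 → j < I := by
    intro j hj
    rw [hIdef, Fin.lt_def]
    simpa using hj
  have hZiff : ∀ ω, (∃ k : Fin 2, ∃ j : Fin n, (j : ℕ) < i - 1 ∧ A.x k 0 ω j = false) ↔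
      Xt ω ∈ GZ := by
    intro ω
    simp only [hGZdef, Set.mem_setOf_eq]
    constructor
    · rintro ⟨k, j, hj, hx⟩
      refine ⟨j, hj, ?_⟩
      fin_cases k
      · exact Or.inl (by rw [hXx ω 0 j (hneI j hj)]; exact hx)
      · exact Or.inr (by rw [hXx ω 1 j (hneI j hj)]; exact hx)
    · rintro ⟨j, hj, h | h⟩
      · exact ⟨0, j, hj, by rw [← hXx ω 0 j (hneI j hj)]; exact h⟩
      · exact ⟨1, j, hj, by rw [← hXx ω 1 j (hneI j hj)]; exact h⟩
  have hWiff : ∀ ω, Xt ω ∈ GZ →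
      ((leadingOnes (A.x 0 0 ω) ≥ leadingOnes (A.x 1 0 ω)) ↔ Xt ω ∈ GW) := by
    intro ω hz
    simp only [hGZdef, Set.mem_setOf_eq] at hz
    obtain ⟨j, hj, hor⟩ := hz
    have h0 : ∀ j', j' ≠ I → A.x 0 0 ω j' = Xt ω 0 j' := fun j' hj' => (hXx ω 0 j' hj').symm
    have h1 : ∀ j', j' ≠ I → A.x 1 0 ω j' = Xt ω 1 j' := fun j' hj' => (hXx ω 1 j' hj').symm
    have hzz : (∃ j', j' < I ∧ A.x 0 0 ω j' = false) ∨
        (∃ j', j' < I ∧ A.x 1 0 ω j' = false) := by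
      rcases hor with h | h
      · exact Or.inl ⟨j, hltI j hj, by rw [← hXx ω 0 j (hneI j hj)]; exact h⟩
      · exact Or.inr ⟨j, hltI j hj, by rw [← hXx ω 1 j (hneI j hj)]; exact h⟩
    have hw := winner_iff (hXI ω 0) (hXI ω 1) h0 h1 hzz
    simpa only [hGWdef, Set.mem_setOf_eq] using hw
  -- the update formula at position I
  have hup : ∀ ω, A.p 1 ω I = capFreq n (c + (1 / μ) *
      (if leadingOnes (A.x 0 0 ω) ≥ leadingOnes (A.x 1 0 ω)
        then ((A.x 0 0 ω I).toNat : ℝ) - ((A.x 1 0 ω I).toNat : ℝ)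
        else ((A.x 1 0 ω I).toNat : ℝ) - ((A.x 0 0 ω I).toNat : ℝ))) := by
    intro ω
    have h := A.hupdate 0 ω I
    rw [A.hp0 ω I, ← hcdef] at h
    exact h
  have hcap1 : capFreq n (c + 1 / μ) = c + 1 / μ :=
    capFreq_eq_self (by linarith) (by linarith)
  have hcap2 : capFreq n (c - 1 / μ) = c - 1 / μ :=
    capFreq_eq_self (by linarith) (by linarith)
  have hmaster : ∀ ω, A.x 0 0 ω I ≠ A.x 1 0 ω I →
      ((A.p 1 ω I = c + 1 / μ ↔
        ((a ω < c ∧ leadingOnes (A.x 0 0 ω) ≥ leadingOnes (A.x 1 0 ω)) ∨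
         (b ω < c ∧ ¬ leadingOnes (A.x 0 0 ω) ≥ leadingOnes (A.x 1 0 ω)))) ∧
       (A.p 1 ω I = c - 1 / μ ↔
        ((a ω < c ∧ ¬ leadingOnes (A.x 0 0 ω) ≥ leadingOnes (A.x 1 0 ω)) ∨
         (b ω < c ∧ leadingOnes (A.x 0 0 ω) ≥ leadingOnes (A.x 1 0 ω))))) := by
    intro ω hd
    have hd' := (hDiff ω).1 hd
    have hupω := hup ω
    rcases hd' with ⟨h1, h2⟩ | ⟨h1, h2⟩ <;>
      by_cases hq : leadingOnes (A.x 0 0 ω) ≥ leadingOnes (A.x 1 0 ω)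
    · -- a < c, ¬ b < c, q
      have e0 : A.x 0 0 ω I = true := by rw [hbita ω]; simp [h1]
      have e1 : A.x 1 0 ω I = false := by rw [hbitb ω]; simp [h2]
      rw [e0, e1, if_pos hq] at hupω
      rw [show c + 1 / μ * (((true.toNat : ℕ) : ℝ) - ((false.toNat : ℕ) : ℝ)) = c + 1 / μ
        by norm_num, hcap1] at hupω
      constructor
      · exact ⟨fun _ => Or.inl ⟨h1, hq⟩, fun _ => hupω⟩
      · constructor
        · intro heq
          rw [hupω] at heq
          exfalso; linarith
        · rintro (⟨-, hnq⟩ | ⟨hb', -⟩)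
          · exact absurd hq hnq
          · exact absurd hb' h2
    · -- a < c, ¬ b < c, ¬ q
      have e0 : A.x 0 0 ω I = true := by rw [hbita ω]; simp [h1]
      have e1 : A.x 1 0 ω I = false := by rw [hbitb ω]; simp [h2]
      rw [e0, e1, if_neg hq] at hupω
      rw [show c + 1 / μ * (((false.toNat : ℕ) : ℝ) - ((true.toNat : ℕ) : ℝ)) = c - 1 / μ
        by norm_num; ring, hcap2] at hupω
      constructor
      · constructor
        · intro heq
          rw [hupω] at heq
          exfalso; linarith
        · rintro (⟨-, hq'⟩ | ⟨hb', -⟩)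
          · exact absurd hq' hq
          · exact absurd hb' h2
      · exact ⟨fun _ => Or.inl ⟨h1, hq⟩, fun _ => hupω⟩
    · -- b < c, ¬ a < c, q
      have e0 : A.x 0 0 ω I = false := by rw [hbita ω]; simp [h2]
      have e1 : A.x 1 0 ω I = true := by rw [hbitb ω]; simp [h1]
      rw [e0, e1, if_pos hq] at hupω
      rw [show c + 1 / μ * (((false.toNat : ℕ) : ℝ) - ((true.toNat : ℕ) : ℝ)) = c - 1 / μ
        by norm_num; ring, hcap2] at hupω
      constructor
      · constructor
        · intro heq
          rw [hupω] at heq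
          exfalso; linarith
        · rintro (⟨ha', -⟩ | ⟨-, hnq⟩)
          · exact absurd ha' h2
          · exact absurd hq hnq
      · exact ⟨fun _ => Or.inr ⟨h1, hq⟩, fun _ => hupω⟩
    · -- b < c, ¬ a < c, ¬ q
      have e0 : A.x 0 0 ω I = false := by rw [hbita ω]; simp [h2]
      have e1 : A.x 1 0 ω I = true := by rw [hbitb ω]; simp [h1]
      rw [e0, e1, if_neg hq] at hupω
      rw [show c + 1 / μ * (((true.toNat : ℕ) : ℝ) - ((false.toNat : ℕ) : ℝ)) = c + 1 / μ
        by norm_num, hcap1] at hupω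
      constructor
      · exact ⟨fun _ => Or.inr ⟨h1, hq⟩, fun _ => hupω⟩
      · constructor
        · intro heq
          rw [hupω] at heq
          exfalso; linarith
        · rintro (⟨ha', -⟩ | ⟨-, hq'⟩)
          · exact absurd ha' h2
          · exact absurd hq' hq
  -- membership characterizations
  have hmemD : ∀ ω, ω ∈ D ↔
      (((a ω < c ∧ ¬ b ω < c) ∨ (b ω < c ∧ ¬ a ω < c)) ∧ Xt ω ∈ GZ) := by
    intro ω
    rw [hD]
    constructor
    · rintro ⟨h1, h2⟩
      exact ⟨(hDiff ω).1 h1, (hZiff ω).1 h2⟩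
    · rintro ⟨h1, h2⟩
      exact ⟨(hDiff ω).2 h1, (hZiff ω).2 h2⟩
  have hmemInc : ∀ ω, ω ∈ Inc ↔ A.p 1 ω I = c + 1 / μ := by
    intro ω
    rw [hInc]
    exact ⟨fun h => h, fun h => h⟩
  have hmemDec : ∀ ω, ω ∈ Dec ↔ A.p 1 ω I = c - 1 / μ := by
    intro ω
    rw [hDec]
    exact ⟨fun h => h, fun h => h⟩
  -- independence setup
  set Soth : Finset (Fin 2 × ℕ × Fin n) :=
    (Finset.univ : Finset (Fin 2)) ×ˢ (({0} : Finset ℕ) ×ˢ (Finset.univ.erase I)) with hSoth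
  set Sab : Finset (Fin 2 × ℕ × Fin n) := {(0, 0, I), (1, 0, I)} with hSab
  have hmemSoth : ∀ (k : Fin 2) (j : Fin n), j ≠ I → ((k, (0 : ℕ), j) ∈ Soth) := by
    intro k j hj
    simp [hSoth, Finset.mem_product, hj]
  have hdisjS : Disjoint Soth Sab := by
    rw [Finset.disjoint_right]
    intro y hy hy2
    simp only [hSab, Finset.mem_insert, Finset.mem_singleton] at hy
    rcases hy with rfl | rfl <;>
      simp [hSoth, Finset.mem_product] at hy2
  have hdecmeas : ∀ r : ℝ, Measurable (fun t : ℝ => decide (t < r)) := by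
    intro r
    have : (fun t : ℝ => decide (t < r)) = fun t => if t < r then true else false := by
      funext t; by_cases h : t < r <;> simp [h]
    rw [this]
    exact Measurable.ite measurableSet_Iio measurable_const measurable_const
  set φ : (Soth → ℝ) → (Fin 2 → Fin n → Bool) := fun v k j =>
    if h : j = I then true else decide (v ⟨(k, 0, j), hmemSoth k j h⟩ < p0 j) with hφdef
  have hφ : Measurable φ := by
    rw [hφdef]
    apply measurable_pi_lambda
    intro k
    apply measurable_pi_lambda
    intro j
    by_cases h : j = I
    · simp only [dif_pos h]; exact measurable_const
    · simp only [dif_neg h]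
      exact (hdecmeas (p0 j)).comp (measurable_pi_apply _)
  set othF : A.Omega → (Soth → ℝ) := fun ω idx => A.u idx.1.1 idx.1.2.1 idx.1.2.2 ω with hothF
  have hothFm : Measurable othF := by
    rw [hothF]
    exact measurable_pi_lambda _ (fun idx => A.uMeas _ _ _)
  have hXtoth : ∀ ω, Xt ω = φ (othF ω) := by
    intro ω
    funext k j
    simp only [hXtdef, hφdef, hothF]
    by_cases h : j = I
    · simp [h]
    · rw [if_neg h, dif_neg h]
      rw [A.hx k 0 ω j, A.hp0 ω j]
  have hXtm : Measurable Xt := by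
    have : Xt = φ ∘ othF := funext hXtoth
    rw [this]
    exact hφ.comp hothFm
  have hI1 := A.uIndep.indepFun_finset Soth Sab hdisjS
    (fun kti => A.uMeas kti.1 kti.2.1 kti.2.2)
  have hI2 : ProbabilityTheory.IndepFun a b A.P := by
    have := A.uIndep.indepFun
      (show ((0 : Fin 2), (0 : ℕ), I) ≠ ((1 : Fin 2), (0 : ℕ), I) by simp)
    exact this
  have ham : Measurable a := A.uMeas 0 0 I
  have hbm : Measurable b := A.uMeas 1 0 I
  have hkey : ∀ (G : Set (Fin 2 → Fin n → Bool)) (A0 B0 : Set ℝ),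
      MeasurableSet A0 → MeasurableSet B0 →
      A.P (Xt ⁻¹' G ∩ a ⁻¹' A0 ∩ b ⁻¹' B0) =
        A.P (Xt ⁻¹' G) * (A.P (a ⁻¹' A0) * A.P (b ⁻¹' B0)) := by
    intro G A0 B0 hA0 hB0
    have hGm : MeasurableSet G := (Set.toFinite G).measurableSet
    have hXeq : Xt ⁻¹' G = othF ⁻¹' (φ ⁻¹' G) := by
      ext ω
      simp only [Set.mem_preimage, hXtoth ω]
    have hpair : A.P (a ⁻¹' A0 ∩ b ⁻¹' B0) = A.P (a ⁻¹' A0) * A.P (b ⁻¹' B0) :=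
      hI2.measure_inter_preimage_eq_mul A0 B0 hA0 hB0
    set sA : Set (Sab → ℝ) :=
      (fun v : Sab → ℝ => v ⟨(0, 0, I), by simp [hSab]⟩) ⁻¹' A0 ∩
      (fun v : Sab → ℝ => v ⟨(1, 0, I), by simp [hSab]⟩) ⁻¹' B0 with hsA
    have hsAm : MeasurableSet sA := by
      rw [hsA]
      apply MeasurableSet.inter
      · exact (measurable_pi_apply _) hA0
      · exact (measurable_pi_apply _) hB0
    have hmain : A.P (othF ⁻¹' (φ ⁻¹' G) ∩ (a ⁻¹' A0 ∩ b ⁻¹' B0)) =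
        A.P (othF ⁻¹' (φ ⁻¹' G)) * A.P (a ⁻¹' A0 ∩ b ⁻¹' B0) :=
      hI1.measure_inter_preimage_eq_mul (φ ⁻¹' G) sA (hφ hGm) hsAm
    rw [Set.inter_assoc, hXeq, hmain, hpair]
  -- uniform probabilities
  have hvol : ∀ (s : Set ℝ), MeasurableSet s → ∀ (k : Fin 2),
      A.P ((A.u k 0 I) ⁻¹' s) = MeasureTheory.volume (s ∩ Set.Icc 0 1) := by
    intro s hs k
    rw [← MeasureTheory.Measure.map_apply (A.uMeas k 0 I) hs, A.uUnif,
      MeasureTheory.Measure.restrict_apply hs]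
  have hIio : Set.Iio c ∩ Set.Icc 0 1 = Set.Ico 0 c := by
    ext t
    simp only [Set.mem_inter_iff, Set.mem_Iio, Set.mem_Icc, Set.mem_Ico]
    constructor
    · rintro ⟨h1, h2, h3⟩; exact ⟨h2, h1⟩
    · rintro ⟨h1, h2⟩; exact ⟨h2, h1, by linarith⟩
  have hIci : (Set.Iio c)ᶜ ∩ Set.Icc 0 1 = Set.Icc c 1 := by
    rw [Set.compl_Iio]
    ext t
    simp only [Set.mem_inter_iff, Set.mem_Ici, Set.mem_Icc]
    constructor
    · rintro ⟨h1, h2, h3⟩; exact ⟨h1, h3⟩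
    · rintro ⟨h1, h2⟩; exact ⟨h1, by linarith, h2⟩
  have hPa : A.P (a ⁻¹' Set.Iio c) = ENNReal.ofReal c := by
    have h := hvol (Set.Iio c) measurableSet_Iio 0
    rw [hIio, Real.volume_Ico, sub_zero] at h
    exact h
  have hPac : A.P (a ⁻¹' (Set.Iio c)ᶜ) = ENNReal.ofReal (1 - c) := by
    have h := hvol (Set.Iio c)ᶜ measurableSet_Iio.compl 0
    rw [hIci, Real.volume_Icc] at h
    exact h
  have hPb : A.P (b ⁻¹' Set.Iio c) = ENNReal.ofReal c := by
    have h := hvol (Set.Iio c) measurableSet_Iio 1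
    rw [hIio, Real.volume_Ico, sub_zero] at h
    exact h
  have hPbc : A.P (b ⁻¹' (Set.Iio c)ᶜ) = ENNReal.ofReal (1 - c) := by
    have h := hvol (Set.Iio c)ᶜ measurableSet_Iio.compl 1
    rw [hIci, Real.volume_Icc] at h
    exact h
  -- set decompositions
  have hIncEq : D ∩ Inc =
      (Xt ⁻¹' (GZ ∩ GW) ∩ a ⁻¹' Set.Iio c ∩ b ⁻¹' (Set.Iio c)ᶜ) ∪
      (Xt ⁻¹' (GZ ∩ GWᶜ) ∩ a ⁻¹' (Set.Iio c)ᶜ ∩ b ⁻¹' Set.Iio c) := by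
    ext ω
    have hmD := hmemD ω
    have hmI := hmemInc ω
    simp only [Set.mem_inter_iff, Set.mem_union, Set.mem_preimage, Set.mem_compl_iff,
      Set.mem_Iio]
    constructor
    · rintro ⟨hωD, hωI⟩
      obtain ⟨hd', hz⟩ := hmD.1 hωD
      have hdiffb : A.x 0 0 ω I ≠ A.x 1 0 ω I := (hDiff ω).2 hd'
      have hm := (hmaster ω hdiffb).1
      have hq := hWiff ω hz
      have hinc := hm.1 (hmI.1 hωI)
      rw [hq] at hinc
      rcases hd' with ⟨hA, hnB⟩ | ⟨hB, hnA⟩ <;> rcases hinc with ⟨hA', hW⟩ | ⟨hB', hnW⟩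
      · exact Or.inl ⟨⟨⟨hz, hW⟩, hA⟩, hnB⟩
      · exact absurd hB' hnB
      · exact absurd hA' hnA
      · exact Or.inr ⟨⟨⟨hz, hnW⟩, hnA⟩, hB⟩
    · rintro (⟨⟨⟨hz, hW⟩, hA⟩, hnB⟩ | ⟨⟨⟨hz, hnW⟩, hnA⟩, hB⟩)
      · have hd' : ((a ω < c ∧ ¬ b ω < c) ∨ (b ω < c ∧ ¬ a ω < c)) := Or.inl ⟨hA, hnB⟩
        have hm := (hmaster ω ((hDiff ω).2 hd')).1
        have hq := hWiff ω hz
        exact ⟨hmD.2 ⟨hd', hz⟩, hmI.2 (hm.2 (Or.inl ⟨hA, hq.2 hW⟩))⟩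
      · have hd' : ((a ω < c ∧ ¬ b ω < c) ∨ (b ω < c ∧ ¬ a ω < c)) := Or.inr ⟨hB, hnA⟩
        have hm := (hmaster ω ((hDiff ω).2 hd')).1
        have hq := hWiff ω hz
        exact ⟨hmD.2 ⟨hd', hz⟩,
          hmI.2 (hm.2 (Or.inr ⟨hB, fun hqq => hnW (hq.1 hqq)⟩))⟩
  have hDecEq : D ∩ Dec =
      (Xt ⁻¹' (GZ ∩ GW) ∩ a ⁻¹' (Set.Iio c)ᶜ ∩ b ⁻¹' Set.Iio c) ∪
      (Xt ⁻¹' (GZ ∩ GWᶜ) ∩ a ⁻¹' Set.Iio c ∩ b ⁻¹' (Set.Iio c)ᶜ) := by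
    ext ω
    have hmD := hmemD ω
    have hmI := hmemDec ω
    simp only [Set.mem_inter_iff, Set.mem_union, Set.mem_preimage, Set.mem_compl_iff,
      Set.mem_Iio]
    constructor
    · rintro ⟨hωD, hωI⟩
      obtain ⟨hd', hz⟩ := hmD.1 hωD
      have hdiffb : A.x 0 0 ω I ≠ A.x 1 0 ω I := (hDiff ω).2 hd'
      have hm := (hmaster ω hdiffb).2
      have hq := hWiff ω hz
      have hdec := hm.1 (hmI.1 hωI)
      rw [hq] at hdec
      rcases hd' with ⟨hA, hnB⟩ | ⟨hB, hnA⟩ <;> rcases hdec with ⟨hA', hnW⟩ | ⟨hB', hW⟩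
      · exact Or.inr ⟨⟨⟨hz, hnW⟩, hA⟩, hnB⟩
      · exact absurd hB' hnB
      · exact absurd hA' hnA
      · exact Or.inl ⟨⟨⟨hz, hW⟩, hnA⟩, hB⟩
    · rintro (⟨⟨⟨hz, hW⟩, hnA⟩, hB⟩ | ⟨⟨⟨hz, hnW⟩, hA⟩, hnB⟩)
      · have hd' : ((a ω < c ∧ ¬ b ω < c) ∨ (b ω < c ∧ ¬ a ω < c)) := Or.inr ⟨hB, hnA⟩
        have hm := (hmaster ω ((hDiff ω).2 hd')).2
        have hq := hWiff ω hz
        exact ⟨hmD.2 ⟨hd', hz⟩, hmI.2 (hm.2 (Or.inr ⟨hB, hq.2 hW⟩))⟩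
      · have hd' : ((a ω < c ∧ ¬ b ω < c) ∨ (b ω < c ∧ ¬ a ω < c)) := Or.inl ⟨hA, hnB⟩
        have hm := (hmaster ω ((hDiff ω).2 hd')).2
        have hq := hWiff ω hz
        exact ⟨hmD.2 ⟨hd', hz⟩,
          hmI.2 (hm.2 (Or.inl ⟨hA, fun hqq => hnW (hq.1 hqq)⟩))⟩
  have hmeasPiece : ∀ (G : Set (Fin 2 → Fin n → Bool)) (s1 s2 : Set ℝ),
      MeasurableSet s1 → MeasurableSet s2 →
      MeasurableSet (Xt ⁻¹' G ∩ a ⁻¹' s1 ∩ b ⁻¹' s2) := by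
    intro G s1 s2 h1 h2
    exact ((hXtm (Set.toFinite G).measurableSet).inter (ham h1)).inter (hbm h2)
  have hdisjp : ∀ (G1 G2 : Set (Fin 2 → Fin n → Bool)) (s2 s2' : Set ℝ),
      Disjoint (Xt ⁻¹' G1 ∩ a ⁻¹' Set.Iio c ∩ b ⁻¹' s2)
        (Xt ⁻¹' G2 ∩ a ⁻¹' (Set.Iio c)ᶜ ∩ b ⁻¹' s2') := by
    intro G1 G2 s2 s2'
    rw [Set.disjoint_left]
    rintro ω ⟨⟨-, h1⟩, -⟩ ⟨⟨-, h2⟩, -⟩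
    exact h2 h1
  have hPInc : A.P (D ∩ Inc) =
      A.P (Xt ⁻¹' (GZ ∩ GW)) * (ENNReal.ofReal c * ENNReal.ofReal (1 - c)) +
      A.P (Xt ⁻¹' (GZ ∩ GWᶜ)) * (ENNReal.ofReal (1 - c) * ENNReal.ofReal c) := by
    rw [hIncEq, MeasureTheory.measure_union (hdisjp _ _ _ _)
      (hmeasPiece _ _ _ measurableSet_Iio.compl measurableSet_Iio),
      hkey _ _ _ measurableSet_Iio measurableSet_Iio.compl,
      hkey _ _ _ measurableSet_Iio.compl measurableSet_Iio,
      hPa, hPac, hPb, hPbc]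
  have hPDec : A.P (D ∩ Dec) =
      A.P (Xt ⁻¹' (GZ ∩ GW)) * (ENNReal.ofReal (1 - c) * ENNReal.ofReal c) +
      A.P (Xt ⁻¹' (GZ ∩ GWᶜ)) * (ENNReal.ofReal c * ENNReal.ofReal (1 - c)) := by
    rw [hDecEq, MeasureTheory.measure_union ((hdisjp _ _ _ _).symm)
      (hmeasPiece _ _ _ measurableSet_Iio measurableSet_Iio.compl),
      hkey _ _ _ measurableSet_Iio.compl measurableSet_Iio,
      hkey _ _ _ measurableSet_Iio measurableSet_Iio.compl,
      hPa, hPac, hPb, hPbc]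
  have hEq : A.P (D ∩ Inc) = A.P (D ∩ Dec) := by
    rw [hPInc, hPDec]
    ring
  have hDu : D = (D ∩ Inc) ∪ (D ∩ Dec) := by
    ext ω
    simp only [Set.mem_union, Set.mem_inter_iff]
    constructor
    · intro hω
      obtain ⟨hd', hz⟩ := (hmemD ω).1 hω
      have hdiffb := (hDiff ω).2 hd'
      have hm := hmaster ω hdiffb
      by_cases hqq : leadingOnes (A.x 0 0 ω) ≥ leadingOnes (A.x 1 0 ω)
      · rcases hd' with ⟨h1, h2⟩ | ⟨h1, h2⟩
        · exact Or.inl ⟨hω, (hmemInc ω).2 (hm.1.2 (Or.inl ⟨h1, hqq⟩))⟩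
        · exact Or.inr ⟨hω, (hmemDec ω).2 (hm.2.2 (Or.inr ⟨h1, hqq⟩))⟩
      · rcases hd' with ⟨h1, h2⟩ | ⟨h1, h2⟩
        · exact Or.inr ⟨hω, (hmemDec ω).2 (hm.2.2 (Or.inl ⟨h1, hqq⟩))⟩
        · exact Or.inl ⟨hω, (hmemInc ω).2 (hm.1.2 (Or.inr ⟨h1, hqq⟩))⟩
    · rintro (h | h)
      · exact h.1
      · exact h.1
  have hdisjID : Disjoint (D ∩ Inc) (D ∩ Dec) := by
    rw [Set.disjoint_left]
    rintro ω ⟨-, h1⟩ ⟨-, h2⟩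
    have e1 := (hmemInc ω).1 h1
    have e2 := (hmemDec ω).1 h2
    rw [e1] at e2
    linarith
  have hmeasDD : MeasurableSet (D ∩ Dec) := by
    rw [hDecEq]
    exact (hmeasPiece _ _ _ measurableSet_Iio.compl measurableSet_Iio).union
      (hmeasPiece _ _ _ measurableSet_Iio measurableSet_Iio.compl)
  have hPD : A.P D = A.P (D ∩ Inc) + A.P (D ∩ Dec) := by
    conv_lhs => rw [hDu]
    exact MeasureTheory.measure_union hdisjID hmeasDD
  have hfin1 : A.P (D ∩ Inc) ≠ ⊤ := MeasureTheory.measure_ne_top _ _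
  have hfin2 : A.P (D ∩ Dec) ≠ ⊤ := MeasureTheory.measure_ne_top _ _
  have hEqR : (A.P (D ∩ Inc)).toReal = (A.P (D ∩ Dec)).toReal := by rw [hEq]
  have hPDR : (A.P D).toReal = (A.P (D ∩ Inc)).toReal + (A.P (D ∩ Dec)).toReal := by
    rw [hPD, ENNReal.toReal_add hfin1 hfin2]
  constructor
  · rw [hPDR]; linarith
  · rw [hPDR]; linarith
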